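/- arXiv:1808.10841 — 5 statements merged into one kernel-verified Lean document; each statement's English description precedes it below -/
import Mathlib

section
/- A linear order of the vertices of a graph admits a k-queue layout (an assignment of edges to k queues so that no two independent edges in the same queue are nested) if and only if the order contains no (k+1)-rainbow, i.e., no k+1 pairwise nested independent edges. -/
open scoped Classical

/-- A chain of `n` edges, each strictly containing the interval `(a,b)`,
pairwise strictly nested (index `0` is outermost). -/
def QChain {V : Type*} (G : SimpleGraph V) (f : V → ℕ) (n : ℕ) (a b : V) : Prop :=
  ∃ s t : Fin n → V, (∀ i, G.Adj (s i) (t i)) ∧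
    (∀ i j, i < j → f (s i) < f (s j) ∧ f (t j) < f (t i)) ∧
    (∀ i, f (s i) < f a ∧ f b < f (t i))

lemma qchain_zero {V : Type*} (G : SimpleGraph V) (f : V → ℕ) (a b : V) :
    QChain G f 0 a b :=
  ⟨Fin.elim0, Fin.elim0, fun i => i.elim0, fun i => i.elim0, fun i => i.elim0⟩

lemma qchain_snoc {V : Type*} {G : SimpleGraph V} {f : V → ℕ} {n : ℕ} {a b c d : V}
    (h : QChain G f n a b) (hab : G.Adj a b) (hac : f a < f c) (hdb : f d < f b) :
    QChain G f (n + 1) c d := by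
  obtain ⟨s, t, hadj, hmono, hcont⟩ := h
  refine ⟨Fin.snoc s a, Fin.snoc t b, ?_, ?_, ?_⟩
  · intro i
    refine Fin.lastCases ?_ ?_ i
    · simpa using hab
    · intro i; simpa using hadj i
  · intro i j
    refine Fin.lastCases ?_ ?_ j
    · intro hij
      have hi : i ≠ Fin.last n := Fin.ne_last_of_lt hij
      obtain ⟨i', rfl⟩ := Fin.exists_castSucc_eq.mpr hi
      simpa using (hcont i')
    · intro j hij
      have hi : i ≠ Fin.last n := Fin.ne_last_of_lt (lt_of_lt_of_le hij (le_of_lt (Fin.castSucc_lt_last j)))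
      obtain ⟨i', rfl⟩ := Fin.exists_castSucc_eq.mpr hi
      have : i' < j := by
        simpa [Fin.castSucc_lt_castSucc_iff] using hij
      simpa using hmono i' j this
  · intro i
    refine Fin.lastCases ?_ ?_ i
    · simpa using ⟨hac, hdb⟩
    · intro i
      have := hcont i
      constructor
      · simpa using this.1.trans hac
      · simpa using hdb.trans this.2

/-- From a chain of `k` edges strictly containing an edge `(a,b)`, we get a
`(k+1)`-rainbow. -/
lemma rainbow_of_qchain {V : Type*} {G : SimpleGraph V} {f : V → ℕ}
    (hf : Function.Injective f) {k : ℕ} {a b : V}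
    (hab : G.Adj a b) (hfab : f a < f b) (h : QChain G f k a b) :
    ∃ s t : Fin (k+1) → V,
        (∀ i, G.Adj (s i) (t i)) ∧
        (∀ i j, i ≠ j → s i ≠ s j ∧ t i ≠ t j ∧ s i ≠ t j) ∧
        (∀ i j : Fin (k+1), i < j →
          f (s i) < f (s j) ∧ f (s j) < f (t j) ∧ f (t j) < f (t i)) := by
  obtain ⟨s, t, hadj, hmono, hcont⟩ := h
  set s' : Fin (k+1) → V := Fin.snoc s a with hs'
  set t' : Fin (k+1) → V := Fin.snoc t b with ht'
  have hadj' : ∀ i, G.Adj (s' i) (t' i) := by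
    intro i
    refine Fin.lastCases ?_ ?_ i
    · simpa [hs', ht'] using hab
    · intro i; simpa [hs', ht'] using hadj i
  have hP : ∀ i, f (s' i) < f (t' i) := by
    intro i
    refine Fin.lastCases ?_ ?_ i
    · simpa [hs', ht'] using hfab
    · intro i
      have h1 := (hcont i).1
      have h2 := (hcont i).2
      simpa [hs', ht'] using h1.trans (hfab.trans h2)
  have hM : ∀ i j : Fin (k+1), i < j →
      f (s' i) < f (s' j) ∧ f (s' j) < f (t' j) ∧ f (t' j) < f (t' i) := by
    intro i j
    refine Fin.lastCases ?_ ?_ j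
    · intro hij
      have hi : i ≠ Fin.last k := Fin.ne_last_of_lt hij
      obtain ⟨i', rfl⟩ := Fin.exists_castSucc_eq.mpr hi
      refine ⟨?_, hP _, ?_⟩
      · simpa [hs'] using (hcont i').1
      · simpa [ht'] using (hcont i').2
    · intro j hij
      have hi : i ≠ Fin.last k := Fin.ne_last_of_lt (lt_of_lt_of_le hij (le_of_lt (Fin.castSucc_lt_last j)))
      obtain ⟨i', rfl⟩ := Fin.exists_castSucc_eq.mpr hi
      have hlt : i' < j := by simpa [Fin.castSucc_lt_castSucc_iff] using hij
      refine ⟨?_, hP _, ?_⟩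
      · simpa [hs'] using (hmono i' j hlt).1
      · simpa [ht'] using (hmono i' j hlt).2
  refine ⟨s', t', hadj', ?_, hM⟩
  intro i j hij
  have hne : ∀ {x y : V}, f x < f y → x ≠ y := by
    intro x y hxy h; exact absurd (congrArg f h) hxy.ne
  rcases lt_or_gt_of_ne hij with h | h
  · obtain ⟨h1, h2, h3⟩ := hM i j h
    exact ⟨hne h1, (hne h3).symm, hne (h1.trans h2)⟩
  · obtain ⟨h1, h2, h3⟩ := hM j i h
    exact ⟨(hne h1).symm, hne h3, hne ((hP i).trans h3)⟩

/-- The maximal length of a chain of edges strictly containing `(a,b)` (capped at `k`). -/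
noncomputable def qdepth {V : Type*} (G : SimpleGraph V) (f : V → ℕ) (k : ℕ) (a b : V) : ℕ :=
  Nat.findGreatest (fun n => QChain G f n a b) k

lemma qchain_qdepth {V : Type*} (G : SimpleGraph V) (f : V → ℕ) (k : ℕ) (a b : V) :
    QChain G f (qdepth G f k a b) a b :=
  Nat.findGreatest_spec (P := fun n => QChain G f n a b) (Nat.zero_le k) (qchain_zero G f a b)

lemma qdepth_lt {V : Type*} {G : SimpleGraph V} {f : V → ℕ}
    (hf : Function.Injective f) {k : ℕ}
    (hR : ¬ ∃ s t : Fin (k+1) → V,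
        (∀ i, G.Adj (s i) (t i)) ∧
        (∀ i j, i ≠ j → s i ≠ s j ∧ t i ≠ t j ∧ s i ≠ t j) ∧
        (∀ i j : Fin (k+1), i < j →
          f (s i) < f (s j) ∧ f (s j) < f (t j) ∧ f (t j) < f (t i)))
    {a b : V} (hab : G.Adj a b) (hfab : f a < f b) :
    qdepth G f k a b < k := by
  have hnc : ¬ QChain G f k a b := fun hc => hR (rainbow_of_qchain hf hab hfab hc)
  have hle : qdepth G f k a b ≤ k := Nat.findGreatest_le k
  rcases lt_or_eq_of_le hle with h | h
  · exact h
  · exact absurd (h ▸ qchain_qdepth G f k a b) hnc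

lemma qdepth_strict {V : Type*} {G : SimpleGraph V} {f : V → ℕ}
    (hf : Function.Injective f) {k : ℕ}
    (hR : ¬ ∃ s t : Fin (k+1) → V,
        (∀ i, G.Adj (s i) (t i)) ∧
        (∀ i j, i ≠ j → s i ≠ s j ∧ t i ≠ t j ∧ s i ≠ t j) ∧
        (∀ i j : Fin (k+1), i < j →
          f (s i) < f (s j) ∧ f (s j) < f (t j) ∧ f (t j) < f (t i)))
    {a b c d : V} (hab : G.Adj a b) (hcd : G.Adj c d)
    (h1 : f a < f c) (h2 : f c < f d) (h3 : f d < f b) :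
    qdepth G f k a b < qdepth G f k c d := by
  have hfab : f a < f b := h1.trans (h2.trans h3)
  have hlt : qdepth G f k a b < k := qdepth_lt hf hR hab hfab
  have hchain : QChain G f (qdepth G f k a b + 1) c d :=
    qchain_snoc (qchain_qdepth G f k a b) hab h1 h3
  exact lt_of_lt_of_le (Nat.lt_succ_self _) (Nat.le_findGreatest hlt hchain)

/-- A linear order (given by an injective `f`) of the vertices of a graph admits a
`k`-queue layout iff it contains no `(k+1)`-rainbow. -/
theorem queue_layout_iff_no_rainbow {V : Type*} (G : SimpleGraph V)
    (f : V → ℕ) (hf : Function.Injective f) (k : ℕ) :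
    (∃ q : G.edgeSet → Fin k,
      ∀ (a b c d : V) (hab : G.Adj a b) (hcd : G.Adj c d),
        f a < f b → f c < f d →
        a ≠ c → a ≠ d → b ≠ c → b ≠ d →
        q ⟨s(a,b), G.mem_edgeSet.mpr hab⟩ = q ⟨s(c,d), G.mem_edgeSet.mpr hcd⟩ →
        ¬ (f a < f c ∧ f c < f d ∧ f d < f b)) ↔
    ¬ ∃ s t : Fin (k+1) → V,
        (∀ i, G.Adj (s i) (t i)) ∧
        (∀ i j, i ≠ j → s i ≠ s j ∧ t i ≠ t j ∧ s i ≠ t j) ∧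
        (∀ i j : Fin (k+1), i < j →
          f (s i) < f (s j) ∧ f (s j) < f (t j) ∧ f (t j) < f (t i)) := by
  constructor
  · rintro ⟨q, hq⟩ ⟨s, t, hadj, hind, hmono⟩
    have hcard : Fintype.card (Fin k) < Fintype.card (Fin (k+1)) := by simp
    obtain ⟨i, j, hij, heq⟩ := Fintype.exists_ne_map_eq_of_card_lt
      (fun i : Fin (k+1) => q ⟨s(s i, t i), G.mem_edgeSet.mpr (hadj i)⟩) hcard
    rcases lt_or_gt_of_ne hij with h | h
    · obtain ⟨h1, h2, h3⟩ := hmono i j h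
      exact hq (s i) (t i) (s j) (t j) (hadj i) (hadj j)
        (h1.trans (h2.trans h3)) h2
        (hind i j hij).1 (hind i j hij).2.2 (hind j i hij.symm).2.2.symm (hind i j hij).2.1
        heq ⟨h1, h2, h3⟩
    · obtain ⟨h1, h2, h3⟩ := hmono j i h
      exact hq (s j) (t j) (s i) (t i) (hadj j) (hadj i)
        (h1.trans (h2.trans h3)) h2
        (hind j i hij.symm).1 (hind j i hij.symm).2.2 (hind i j hij).2.2.symm (hind j i hij.symm).2.1
        heq.symm ⟨h1, h2, h3⟩
  · intro hR
    have hsym : ∀ a b : V, (if f a < f b then qdepth G f k a b else qdepth G f k b a)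
        = (if f b < f a then qdepth G f k b a else qdepth G f k a b) := by
      intro a b
      rcases lt_trichotomy (f a) (f b) with h | h | h
      · simp [h, not_lt.mpr h.le]
      · have : a = b := hf h
        subst this; simp
      · simp [h, not_lt.mpr h.le]
    set D : Sym2 V → ℕ := Sym2.lift ⟨fun a b => if f a < f b then qdepth G f k a b
      else qdepth G f k b a, hsym⟩ with hD
    have hDlt : ∀ e : G.edgeSet, D e.1 < k := by
      rintro ⟨e, he⟩
      induction e using Sym2.ind with
      | _ a b =>
        have hab : G.Adj a b := G.mem_edgeSet.mp he
        rcases lt_or_gt_of_ne (fun h : f a = f b => hab.ne (hf h)) with h | h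
        · simpa [hD, h] using qdepth_lt hf hR hab h
        · simpa [hD, h, not_lt.mpr h.le] using qdepth_lt hf hR hab.symm h
    refine ⟨fun e => ⟨D e.1, hDlt e⟩, ?_⟩
    intro a b c d hab hcd hfab hfcd _ _ _ _ heq hnest
    obtain ⟨h1, h2, h3⟩ := hnest
    have hda : D s(a, b) = qdepth G f k a b := by simp [hD, hfab]
    have hdc : D s(c, d) = qdepth G f k c d := by simp [hD, hfcd]
    have : qdepth G f k a b = qdepth G f k c d := by
      have := congrArg Fin.val heq
      simpa [hda, hdc] using this
    exact absurd this (qdepth_strict hf hR hab hcd h1 h2 h3).ne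
end

section
/- For any linear order of the vertices of a graph, the minimum number of queues needed (with respect to that order) equals the maximum size of a rainbow in that order. -/
section Aux

variable {V : Type*} [Fintype V]

/-- The set of sizes of rainbows. -/
private def RainbowSet (G : SimpleGraph V) (f : V → ℕ) : Set ℕ :=
  {m : ℕ | ∃ s t : Fin m → V,
      (∀ i, G.Adj (s i) (t i)) ∧
      (∀ i j, i ≠ j → s i ≠ s j ∧ t i ≠ t j ∧ s i ≠ t j) ∧
      (∀ i j : Fin m, i < j →
        f (s i) < f (s j) ∧ f (s j) < f (t j) ∧ f (t j) < f (t i))}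

/-- Sizes of rainbows whose outermost edge is `e` (with all edges `f`-oriented). -/
private def RSet (G : SimpleGraph V) (f : V → ℕ) (e : Sym2 V) : Set ℕ :=
  {m : ℕ | ∃ s t : Fin m → V, ∃ h : 0 < m,
      (∀ i, G.Adj (s i) (t i)) ∧
      (∀ i j, i ≠ j → s i ≠ s j ∧ t i ≠ t j ∧ s i ≠ t j) ∧
      (∀ i j : Fin m, i < j →
        f (s i) < f (s j) ∧ f (s j) < f (t j) ∧ f (t j) < f (t i)) ∧
      (∀ i, f (s i) < f (t i)) ∧
      s(s ⟨0, h⟩, t ⟨0, h⟩) = e}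

private lemma rainbow_le_card (G : SimpleGraph V) (f : V → ℕ) {m : ℕ}
    (hm : m ∈ RainbowSet G f) : m ≤ Fintype.card V := by
  obtain ⟨s, t, -, hdist, -⟩ := hm
  have hinj : Function.Injective s := by
    intro i j hij
    by_contra hne
    exact (hdist i j hne).1 hij
  simpa using Fintype.card_le_of_injective s hinj

private lemma rset_subset (G : SimpleGraph V) (f : V → ℕ) (e : Sym2 V) :
    RSet G f e ⊆ RainbowSet G f := by
  rintro m ⟨s, t, h, h1, h2, h3, -, -⟩
  exact ⟨s, t, h1, h2, h3⟩

private lemma one_mem_rset {G : SimpleGraph V} {f : V → ℕ} {a b : V}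
    (hab : G.Adj a b) (hord : f a < f b) : 1 ∈ RSet G f s(a, b) := by
  refine ⟨fun _ => a, fun _ => b, one_pos, fun _ => hab, ?_, ?_, fun _ => hord, rfl⟩
  · intro i j hne
    exact absurd (Subsingleton.elim i j) hne
  · intro i j hij
    exact absurd (Subsingleton.elim i j) hij.ne

private lemma rset_nonempty {G : SimpleGraph V} {f : V → ℕ} (hf : Function.Injective f)
    {e : Sym2 V} (he : e ∈ G.edgeSet) : ∃ m, 1 ≤ m ∧ m ∈ RSet G f e := by
  induction e using Sym2.ind with
  | _ a b =>
    rw [SimpleGraph.mem_edgeSet] at he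
    have hne : f a ≠ f b := fun h => he.ne (hf h)
    rcases hne.lt_or_gt with h | h
    · exact ⟨1, le_refl 1, one_mem_rset he h⟩
    · have : s(a, b) = s(b, a) := Sym2.eq_swap
      rw [this]
      exact ⟨1, le_refl 1, one_mem_rset he.symm h⟩

private lemma extend_rset {G : SimpleGraph V} {f : V → ℕ}
    {a b c d : V} (hab : G.Adj a b)
    (h1 : f a < f c) (h2 : f c < f d) (h3 : f d < f b) {m : ℕ}
    (hm : m ∈ RSet G f s(c, d)) : m + 1 ∈ RSet G f s(a, b) := by
  obtain ⟨s, t, hpos, hadj, hdist, hord, hlt, heq⟩ := hm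
  have hz : s ⟨0, hpos⟩ = c ∧ t ⟨0, hpos⟩ = d := by
    rcases Sym2.eq_iff.mp heq with ⟨ha, hb⟩ | ⟨ha, hb⟩
    · exact ⟨ha, hb⟩
    · exfalso
      have := hlt ⟨0, hpos⟩
      rw [ha, hb] at this
      omega
  have hsc : ∀ i, f c ≤ f (s i) := by
    intro i
    rcases eq_or_ne i ⟨0, hpos⟩ with h | h
    · rw [h, hz.1]
    · have hlt0 : (⟨0, hpos⟩ : Fin m) < i := by
        have hv : (i : ℕ) ≠ 0 := fun h0 => h (Fin.ext h0)
        rw [Fin.lt_def]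
        show 0 < (i : ℕ)
        omega
      have := (hord _ _ hlt0).1
      rw [hz.1] at this
      exact this.le
  have htd : ∀ i, f (t i) ≤ f d := by
    intro i
    rcases eq_or_ne i ⟨0, hpos⟩ with h | h
    · rw [h, hz.2]
    · have hlt0 : (⟨0, hpos⟩ : Fin m) < i := by
        have hv : (i : ℕ) ≠ 0 := fun h0 => h (Fin.ext h0)
        rw [Fin.lt_def]
        show 0 < (i : ℕ)
        omega
      have := (hord _ _ hlt0).2.2
      rw [hz.2] at this
      exact this.le
  have fa_lt : ∀ i, f a < f (s i) := fun i => lt_of_lt_of_le h1 (hsc i)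
  have ft_lt : ∀ i, f (t i) < f b := fun i => lt_of_le_of_lt (htd i) h3
  refine ⟨Fin.cons a s, Fin.cons b t, Nat.succ_pos m, ?_, ?_, ?_, ?_, ?_⟩
  · intro i
    induction i using Fin.cases with
    | zero => simpa using hab
    | succ i => simpa using hadj i
  · intro i j hne
    induction i using Fin.cases with
    | zero =>
      induction j using Fin.cases with
      | zero => exact absurd rfl hne
      | succ j =>
        simp only [Fin.cons_zero, Fin.cons_succ]
        refine ⟨?_, ?_, ?_⟩
        · intro h; have := fa_lt j; rw [← h] at this; omega
        · intro h; have := ft_lt j; rw [← h] at this; omega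
        · intro h; have h' := fa_lt j; have h'' := hlt j; rw [← h] at h''; omega
    | succ i =>
      induction j using Fin.cases with
      | zero =>
        simp only [Fin.cons_zero, Fin.cons_succ]
        refine ⟨?_, ?_, ?_⟩
        · intro h; have := fa_lt i; rw [h] at this; omega
        · intro h; have := ft_lt i; rw [h] at this; omega
        · intro h; have h' := ft_lt i; have h'' := hlt i; rw [h] at h''; omega
      | succ j =>
        simp only [Fin.cons_succ]
        exact hdist i j (fun h => hne (congrArg Fin.succ h))
  · intro i j hij
    induction i using Fin.cases with
    | zero =>
      induction j using Fin.cases with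
      | zero => exact absurd hij (lt_irrefl _)
      | succ j =>
        simp only [Fin.cons_zero, Fin.cons_succ]
        exact ⟨fa_lt j, hlt j, ft_lt j⟩
    | succ i =>
      induction j using Fin.cases with
      | zero =>
        exact absurd hij (Fin.not_lt_zero _)
      | succ j =>
        simp only [Fin.cons_succ]
        exact hord i j (Fin.succ_lt_succ_iff.mp hij)
  · intro i
    induction i using Fin.cases with
    | zero => simpa using h1.trans (h2.trans h3)
    | succ i => simpa using hlt i
  · rfl

end Aux

/-- For a fixed linear order (given by injective `f`) of the vertices of a finite graph,
the minimum number of queues needed equals the maximum size of a rainbow. -/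
theorem min_queues_eq_max_rainbow {V : Type*} [Fintype V] (G : SimpleGraph V)
    (f : V → ℕ) (hf : Function.Injective f) :
    sInf {k : ℕ | ∃ q : G.edgeSet → Fin k,
      ∀ (a b c d : V) (hab : G.Adj a b) (hcd : G.Adj c d),
        f a < f b → f c < f d →
        a ≠ c → a ≠ d → b ≠ c → b ≠ d →
        q ⟨s(a,b), G.mem_edgeSet.mpr hab⟩ = q ⟨s(c,d), G.mem_edgeSet.mpr hcd⟩ →
        ¬ (f a < f c ∧ f c < f d ∧ f d < f b)} =
    sSup {m : ℕ | ∃ s t : Fin m → V,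
        (∀ i, G.Adj (s i) (t i)) ∧
        (∀ i j, i ≠ j → s i ≠ s j ∧ t i ≠ t j ∧ s i ≠ t j) ∧
        (∀ i j : Fin m, i < j →
          f (s i) < f (s j) ∧ f (s j) < f (t j) ∧ f (t j) < f (t i))} := by
  classical
  have hRS : {m : ℕ | ∃ s t : Fin m → V,
        (∀ i, G.Adj (s i) (t i)) ∧
        (∀ i j, i ≠ j → s i ≠ s j ∧ t i ≠ t j ∧ s i ≠ t j) ∧
        (∀ i j : Fin m, i < j →
          f (s i) < f (s j) ∧ f (s j) < f (t j) ∧ f (t j) < f (t i))} = RainbowSet G f := rfl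
  rw [hRS]
  set Q := {k : ℕ | ∃ q : G.edgeSet → Fin k,
      ∀ (a b c d : V) (hab : G.Adj a b) (hcd : G.Adj c d),
        f a < f b → f c < f d →
        a ≠ c → a ≠ d → b ≠ c → b ≠ d →
        q ⟨s(a,b), G.mem_edgeSet.mpr hab⟩ = q ⟨s(c,d), G.mem_edgeSet.mpr hcd⟩ →
        ¬ (f a < f c ∧ f c < f d ∧ f d < f b)} with hQdef
  have bddR : BddAbove (RainbowSet G f) :=
    ⟨Fintype.card V, fun m hm => rainbow_le_card G f hm⟩
  have h0R : 0 ∈ RainbowSet G f := by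
    refine ⟨Fin.elim0, Fin.elim0, fun i => i.elim0, fun i => i.elim0, fun i => i.elim0⟩
  set M := sSup (RainbowSet G f) with hMdef
  -- key facts about r
  set r : Sym2 V → ℕ := fun e => sSup (RSet G f e) with hrdef
  have bddRSet : ∀ e : Sym2 V, BddAbove (RSet G f e) :=
    fun e => bddR.mono (rset_subset G f e)
  have key : ∀ e ∈ G.edgeSet, 1 ≤ r e ∧ r e ≤ M := by
    intro e he
    obtain ⟨m, hm1, hm⟩ := rset_nonempty hf he
    constructor
    · exact le_trans hm1 (le_csSup (bddRSet e) hm)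
    · exact csSup_le ⟨m, hm⟩ (fun x hx => le_csSup bddR (rset_subset G f e hx))
  have rmem : ∀ e ∈ G.edgeSet, r e ∈ RSet G f e := by
    intro e he
    obtain ⟨m, hm1, hm⟩ := rset_nonempty hf he
    exact Nat.sSup_mem ⟨m, hm⟩ (bddRSet e)
  -- M is a queue number witness
  have hMQ : M ∈ Q := by
    refine ⟨fun e => ⟨r e.1 - 1, ?_⟩, ?_⟩
    · have h := key e.1 e.2
      have hM1 : 1 ≤ M := le_trans h.1 h.2
      omega
    · intro a b c d hab hcd hfab hfcd hac had hbc hbd hq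
      rintro ⟨n1, n2, n3⟩
      have hrr : r s(a, b) - 1 = r s(c, d) - 1 := congrArg Fin.val hq
      have kab := key s(a, b) (G.mem_edgeSet.mpr hab)
      have kcd := key s(c, d) (G.mem_edgeSet.mpr hcd)
      have hext : r s(c, d) + 1 ∈ RSet G f s(a, b) :=
        extend_rset hab n1 hfcd n3 (rmem s(c, d) (G.mem_edgeSet.mpr hcd))
      have : r s(c, d) + 1 ≤ r s(a, b) := le_csSup (bddRSet _) hext
      omega
  -- every queue number is at least M
  have hQge : ∀ k ∈ Q, M ≤ k := by
    intro k hk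
    obtain ⟨q, hq⟩ := hk
    have hMmem : M ∈ RainbowSet G f := Nat.sSup_mem ⟨0, h0R⟩ bddR
    obtain ⟨s, t, hadj, hdist, hord⟩ := hMmem
    have hinj : Function.Injective
        (fun i : Fin M => q ⟨s(s i, t i), G.mem_edgeSet.mpr (hadj i)⟩) := by
      intro i j hij
      by_contra hne
      rcases lt_or_gt_of_ne hne with h | h
      · obtain ⟨o1, o2, o3⟩ := hord i j h
        obtain ⟨d1, d2, d3⟩ := hdist i j hne
        have d4 : t i ≠ s j := fun h' => (hdist j i (fun h' => hne h'.symm)).2.2 h'.symm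
        exact hq (s i) (t i) (s j) (t j) (hadj i) (hadj j) (by omega) o2
          d1 d3 d4 d2 hij ⟨o1, o2, o3⟩
      · obtain ⟨o1, o2, o3⟩ := hord j i h
        obtain ⟨d1, d2, d3⟩ := hdist j i (fun h' => hne h'.symm)
        have d4 : t j ≠ s i := fun h' => (hdist i j hne).2.2 h'.symm
        exact hq (s j) (t j) (s i) (t i) (hadj j) (hadj i) (by omega) o2
          d1 d3 d4 d2 hij.symm ⟨o1, o2, o3⟩
    have := Fintype.card_le_of_injective _ hinj
    simpa using this
  exact le_antisymm (Nat.sInf_le hMQ) (le_csInf ⟨M, hMQ⟩ hQge)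
end

section
/- Every tree admits a 1-queue layout: there is a linear order of its vertices (e.g., a BFS order) under which no two independent edges are nested. -/
/-!
Root the tree at `r`, number the `n` vertices `1, …, n`, and let `f v` be the number whose
base-`(n+1)` digits, lowest first, are the numbers of the vertices on the path from `v` to `r`;
this is a BFS order. The lowest digit of `f v` is the number of `v`, so `f` is injective. Along
every edge the path of one endpoint is the path of the other with that endpoint prepended, so the
endpoint with the larger key is the child `b` of the other endpoint `a`, and `f b` is the
number of `b` plus `(n + 1) * f a`. Hence `f a < f c` forces `f b < f d` for the children `b`,
`d` of `a`, `c`, and no two edges are nested.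
-/

namespace SimpleGraph

variable {V : Type*} {G : SimpleGraph V} {r u v : V}

namespace Walk

def ofDigits (b : ℕ) (g : V → ℕ) (p : G.Walk u v) : ℕ :=
  Nat.ofDigits b (p.support.map g)

@[simp]
theorem ofDigits_cons (b : ℕ) (g : V → ℕ) (h : G.Adj u v) (p : G.Walk v r) :
    (cons h p).ofDigits b g = g u + b * p.ofDigits b g :=
  rfl

theorem ofDigits_mod {b : ℕ} {g : V → ℕ} (hg : g u < b) (p : G.Walk u v) :
    p.ofDigits b g % b = g u := by
  cases p with
  | nil => simpa [ofDigits] using Nat.mod_eq_of_lt hg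
  | cons h p => rw [ofDigits_cons, Nat.add_mul_mod_self_left, Nat.mod_eq_of_lt hg]

end Walk

namespace IsAcyclic

theorem length_lt_of_mem_support [DecidableEq V] (hG : G.IsAcyclic) (p : G.Path v r)
    (q : G.Path u r) (hu : u ∈ p.1.support) (huv : u ≠ v) : q.1.length < p.1.length := by
  have hq : q = ⟨p.1.dropUntil u hu, p.2.dropUntil hu⟩ := (hG.subsingleton_path u r).elim _ _
  have htake : (p.1.takeUntil u hu).length ≠ 0 := fun h => huv (Walk.eq_of_length_eq_zero h).symm
  have hsplit := congrArg Walk.length (p.1.take_spec hu)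
  rw [Walk.length_append] at hsplit
  rw [hq]
  dsimp only
  omega

theorem eq_cons_or_eq_cons [DecidableEq V] (hG : G.IsAcyclic) (h : G.Adj u v)
    (p : G.Path u r) (q : G.Path v r) : p.1 = Walk.cons h q.1 ∨ q.1 = Walk.cons h.symm p.1 := by
  by_cases hu : u ∈ q.1.support
  · by_cases hv : v ∈ p.1.support
    · exact absurd (hG.length_lt_of_mem_support p q hv h.ne.symm)
        (hG.length_lt_of_mem_support q p hu h.ne).asymm
    · exact .inr (congrArg Subtype.val ((hG.subsingleton_path v r).elim q ⟨_, p.2.cons hv⟩))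
  · exact .inl (congrArg Subtype.val ((hG.subsingleton_path u r).elim p ⟨_, q.2.cons hu⟩))

theorem ofDigits_eq_of_adj_of_lt [DecidableEq V] (hG : G.IsAcyclic) {b : ℕ} {g : V → ℕ}
    (hb : 0 < b) (hg : ∀ w, 0 < g w) (h : G.Adj u v) (p : G.Path u r) (q : G.Path v r)
    (hlt : p.1.ofDigits b g < q.1.ofDigits b g) :
    q.1.ofDigits b g = g v + b * p.1.ofDigits b g := by
  rcases hG.eq_cons_or_eq_cons h p q with hp | hq
  · rw [hp, Walk.ofDigits_cons] at hlt
    have := Nat.le_mul_of_pos_left (q.1.ofDigits b g) hb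
    have := hg u
    omega
  · rw [hq, Walk.ofDigits_cons]

end IsAcyclic

end SimpleGraph

theorem Nat.add_mul_lt_add_mul {b x y m n : ℕ} (hx : x < b) (hmn : m < n) :
    x + b * m < y + b * n :=
  calc x + b * m < b * (m + 1) := by rw [Nat.mul_succ]; omega
    _ ≤ b * n := Nat.mul_le_mul_left b hmn
    _ ≤ y + b * n := Nat.le_add_left _ _

/-- Every tree admits a 1-queue layout: there is a linear order of its vertices under
which no two independent edges are nested. -/
theorem tree_one_queue {V : Type*} [Fintype V] (G : SimpleGraph V) (hG : G.IsTree) :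
    ∃ f : V → ℕ, Function.Injective f ∧
      ∀ a b c d : V, G.Adj a b → G.Adj c d →
        f a < f b → f c < f d →
        a ≠ c → a ≠ d → b ≠ c → b ≠ d →
        ¬ (f a < f c ∧ f c < f d ∧ f d < f b) := by
  classical
  obtain ⟨r⟩ := hG.connected.nonempty
  let path (v : V) : G.Path v r := (hG.connected v r).some.toPath
  let B := Fintype.card V + 1
  let digit (v : V) : ℕ := Fintype.equivFin V v + 1
  have digit_lt (v : V) : digit v < B := Nat.succ_lt_succ (Fintype.equivFin V v).isLt
  let f (v : V) : ℕ := (path v).1.ofDigits B digit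
  have child (a b : V) (hab : G.Adj a b) (hlt : f a < f b) : f b = digit b + B * f a :=
    hG.isAcyclic.ofDigits_eq_of_adj_of_lt (Nat.succ_pos _) (fun _ => Nat.succ_pos _) hab _ _ hlt
  refine ⟨f, fun x y hxy => ?_, ?_⟩
  · have hdigit : digit x = digit y := by
      rw [← SimpleGraph.Walk.ofDigits_mod (digit_lt x) (path x).1,
        ← SimpleGraph.Walk.ofDigits_mod (digit_lt y) (path y).1]
      exact congrArg (· % B) hxy
    exact (Fintype.equivFin V).injective (Fin.ext (Nat.succ_injective hdigit))
  · rintro a b c d hab hcd hfab hfcd - - - - ⟨hac, -, hdb⟩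
    have hbd : f b < f d := by
      rw [child a b hab hfab, child c d hcd hfcd]
      exact Nat.add_mul_lt_add_mul (digit_lt b) hac
    omega
end

section
/- If a graph admits a 1-queue layout, then it has at most 2n−3 edges, where n ≥ 2 is its number of vertices. -/
/-- If a graph on `n ≥ 2` vertices admits a 1-queue layout, then it has at most
`2 * n - 3` edges. -/
theorem one_queue_edge_bound {V : Type*} [Fintype V] [DecidableEq V]
    (G : SimpleGraph V) [DecidableRel G.Adj]
    (hn : 2 ≤ Fintype.card V)
    (f : V → ℕ) (hf : Function.Injective f)
    (h : ∀ a b c d : V, G.Adj a b → G.Adj c d →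
        f a < f b → f c < f d →
        a ≠ c → a ≠ d → b ≠ c → b ≠ d →
        ¬ (f a < f c ∧ f c < f d ∧ f d < f b)) :
    G.edgeFinset.card ≤ 2 * Fintype.card V - 3 := by
  set n := Fintype.card V with hn'
  set r : V → ℕ := fun v => (Finset.univ.filter (fun u => f u < f v)).card with hr
  have hmono : ∀ u v : V, f u < f v → r u < r v := by
    intro u v huv
    apply Finset.card_lt_card
    constructor
    · intro w hw
      simp only [Finset.mem_filter, Finset.mem_univ, true_and] at *
      exact hw.trans huv
    · intro hsub
      have hu : u ∈ Finset.univ.filter (fun w => f w < f v) := by simp [huv]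
      have := hsub hu
      simp at this
  have hiff : ∀ u v : V, r u < r v ↔ f u < f v := by
    intro u v
    constructor
    · intro h'
      by_contra hle
      push_neg at hle
      rcases lt_or_eq_of_le hle with h2 | h2
      · exact absurd (hmono v u h2) (by omega)
      · have : v = u := hf h2
        subst this; omega
    · exact hmono u v
  have rinj : Function.Injective r := by
    intro u v huv
    by_contra hne
    rcases lt_trichotomy (f u) (f v) with h1 | h1 | h1
    · have := hmono u v h1; omega
    · exact hne (hf h1)
    · have := hmono v u h1; omega
  have rbound : ∀ v : V, r v ≤ n - 1 := by
    intro v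
    have hsub : (Finset.univ.filter (fun u => f u < f v)) ⊆ Finset.univ.erase v := by
      intro w hw
      simp only [Finset.mem_filter, Finset.mem_univ, true_and] at hw
      refine Finset.mem_erase.2 ⟨?_, Finset.mem_univ w⟩
      intro hwv; subst hwv; omega
    have := Finset.card_le_card hsub
    rwa [Finset.card_erase_of_mem (Finset.mem_univ v), Finset.card_univ] at this
  -- key injectivity lemma, asymmetric version
  have key1 : ∀ a b c d : V, G.Adj a b → G.Adj c d → f a < f b → f c < f d →
      f a < f c → r a + r b = r c + r d → False := by
    intro a b c d hab hcd h1 h2 h3 hsum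
    have hac : r a < r c := hmono a c h3
    have hdb : r d < r b := by omega
    have hfdb : f d < f b := (hiff d b).1 hdb
    have hfad : f a < f d := h3.trans h2
    refine h a b c d hab hcd h1 h2 ?_ ?_ ?_ ?_ ⟨h3, h2, hfdb⟩
    · intro hq; subst hq; omega
    · intro hq; subst hq; omega
    · intro hq; subst hq; omega
    · intro hq; subst hq; omega
  have key0 : ∀ a b c d : V, G.Adj a b → G.Adj c d → f a < f b → f c < f d →
      r a + r b = r c + r d → s(a, b) = s(c, d) := by
    intro a b c d hab hcd h1 h2 hsum
    rcases lt_trichotomy (f a) (f c) with h3 | h3 | h3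
    · exact absurd (key1 a b c d hab hcd h1 h2 h3 hsum) (fun q => q)
    · have hac : a = c := hf h3
      subst hac
      have : r b = r d := by omega
      have : b = d := rinj this
      subst this; rfl
    · exact absurd (key1 c d a b hcd hab h2 h1 h3 hsum.symm) (fun q => q)
  have key : ∀ a b c d : V, G.Adj a b → G.Adj c d →
      r a + r b = r c + r d → s(a, b) = s(c, d) := by
    intro a b c d hab hcd hsum
    have hab' : f a ≠ f b := fun q => G.ne_of_adj hab (hf q)
    have hcd' : f c ≠ f d := fun q => G.ne_of_adj hcd (hf q)
    rcases hab'.lt_or_gt with h1 | h1 <;> rcases hcd'.lt_or_gt with h2 | h2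
    · exact key0 a b c d hab hcd h1 h2 hsum
    · rw [Sym2.eq_swap (a := c)]
      exact key0 a b d c hab hcd.symm h1 h2 (by omega)
    · rw [Sym2.eq_swap (a := a)]
      exact key0 b a c d hab.symm hcd h1 h2 (by omega)
    · rw [Sym2.eq_swap (a := a), Sym2.eq_swap (a := c)]
      exact key0 b a d c hab.symm hcd.symm h1 h2 (by omega)
  -- the weight function on unordered pairs
  set g : Sym2 V → ℕ := Sym2.lift ⟨fun a b => r a + r b, fun a b => by ring⟩ with hg
  have hgmk : ∀ a b : V, g s(a, b) = r a + r b := fun a b => rfl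
  have hmaps : ∀ e ∈ G.edgeFinset, g e ∈ Finset.Icc 1 (2 * n - 3) := by
    intro e he
    induction e using Sym2.ind with
    | _ a b =>
      rw [SimpleGraph.mem_edgeFinset, SimpleGraph.mem_edgeSet] at he
      have hne : a ≠ b := G.ne_of_adj he
      have h1 := rbound a
      have h2 := rbound b
      have h3 : r a ≠ r b := fun q => hne (rinj q)
      rw [hgmk, Finset.mem_Icc]
      omega
  have hinj : Set.InjOn g G.edgeFinset := by
    intro e1 he1 e2 he2 heq
    induction e1 using Sym2.ind with
    | _ a b =>
      induction e2 using Sym2.ind with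
      | _ c d =>
        simp only [Finset.mem_coe, SimpleGraph.mem_edgeFinset, SimpleGraph.mem_edgeSet] at he1 he2
        exact key a b c d he1 he2 heq
  have := Finset.card_le_card_of_injOn g hmaps hinj
  rwa [Nat.card_Icc, Nat.add_sub_cancel] at this
end

section
/- If a graph admits a t-track layout, then it admits a (t−1)-queue layout. -/
/-- If a graph admits a `t`-track layout, then it admits a `(t-1)`-queue layout. -/
theorem track_to_queue {V : Type*} [Fintype V] (G : SimpleGraph V) (t : ℕ)
    (τ : V → Fin t) (pos : V → ℕ)
    (hind : ∀ u v : V, G.Adj u v → τ u ≠ τ v)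
    (hposInj : ∀ u v : V, τ u = τ v → pos u = pos v → u = v)
    (hnoX : ∀ u v x y : V, G.Adj u v → G.Adj x y → τ u = τ x → τ v = τ y →
      pos u < pos x → pos v ≤ pos y) :
    ∃ (f : V → ℕ) (q : G.edgeSet → Fin (t - 1)),
      Function.Injective f ∧
      ∀ (a b c d : V) (hab : G.Adj a b) (hcd : G.Adj c d),
        f a < f b → f c < f d →
        a ≠ c → a ≠ d → b ≠ c → b ≠ d →
        q ⟨s(a,b), G.mem_edgeSet.mpr hab⟩ = q ⟨s(c,d), G.mem_edgeSet.mpr hcd⟩ →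
        ¬ (f a < f c ∧ f c < f d ∧ f d < f b) := by
  classical
  set M := Finset.univ.sup pos with hM
  have hposle : ∀ v, pos v ≤ M := fun v => Finset.le_sup (Finset.mem_univ v)
  set f : V → ℕ := fun v => (τ v).val * (M + 1) + pos v with hf
  -- lexicographic comparison facts
  have flt : ∀ u v, (τ u).val < (τ v).val → f u < f v := by
    intro u v h
    have h1 : (τ u).val * (M + 1) + pos u < ((τ u).val + 1) * (M + 1) := by
      have := hposle u; nlinarith
    calc f u < ((τ u).val + 1) * (M + 1) := h1
      _ ≤ (τ v).val * (M + 1) := Nat.mul_le_mul_right _ h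
      _ ≤ f v := Nat.le_add_right _ _
  have fcases : ∀ u v, f u < f v →
      (τ u).val < (τ v).val ∨ (τ u = τ v ∧ pos u < pos v) := by
    intro u v h
    rcases lt_trichotomy (τ u).val (τ v).val with h1 | h1 | h1
    · exact Or.inl h1
    · right
      refine ⟨Fin.ext h1, ?_⟩
      simp only [hf, h1] at h
      exact Nat.lt_of_add_lt_add_left h
    · exact absurd (flt v u h1) (by omega)
  have finj : Function.Injective f := by
    intro u v huv
    rcases lt_trichotomy (τ u).val (τ v).val with h1 | h1 | h1
    · exact absurd (flt u v h1) (by omega)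
    · have hτ : τ u = τ v := Fin.ext h1
      simp only [hf, h1] at huv
      exact hposInj u v hτ (Nat.add_left_cancel huv)
    · exact absurd (flt v u h1) (by omega)
  -- queue assignment
  set qn : Sym2 V → ℕ := Sym2.lift ⟨fun a b =>
      max (τ a).val (τ b).val - min (τ a).val (τ b).val - 1, by
    intro a b; simp [max_comm, min_comm]⟩ with hqn
  have hbound : ∀ e : G.edgeSet, qn e.1 < t - 1 := by
    rintro ⟨e, he⟩
    induction e using Sym2.ind with
    | _ a b =>
      have hadj : G.Adj a b := G.mem_edgeSet.mp he
      have hne : (τ a).val ≠ (τ b).val := fun h => hind a b hadj (Fin.ext h)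
      have h1 := (τ a).is_lt
      have h2 := (τ b).is_lt
      simp only [hqn, Sym2.lift_mk]
      omega
  refine ⟨f, fun e => ⟨qn e.1, hbound e⟩, finj, ?_⟩
  intro a b c d hab hcd hfab hfcd hac had hbc hbd hq
  rintro ⟨h1, h2, h3⟩
  have hqv : qn s(a, b) = qn s(c, d) := congrArg Fin.val hq
  simp only [hqn, Sym2.lift_mk] at hqv
  -- track order along edges
  have hτab : (τ a).val < (τ b).val := by
    rcases fcases a b hfab with h | ⟨h, _⟩
    · exact h
    · exact absurd h (hind a b hab)
  have hτcd : (τ c).val < (τ d).val := by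
    rcases fcases c d hfcd with h | ⟨h, _⟩
    · exact h
    · exact absurd h (hind c d hcd)
  rcases fcases a c h1 with hac' | ⟨hacτ, hacp⟩
  · rcases fcases d b h3 with hdb' | ⟨hdbτ, _⟩
    · omega
    · have := congrArg Fin.val hdbτ
      omega
  · rcases fcases d b h3 with hdb' | ⟨hdbτ, hdbp⟩
    · have := congrArg Fin.val hacτ
      omega
    · have hbd' : τ b = τ d := hdbτ.symm
      have := hnoX a b c d hab hcd hacτ hbd' hacp
      omega
end
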